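/- arXiv:1009.3905 — 5 statements merged into one kernel-verified Lean document; each statement's English description precedes it below -/
import Mathlib

section
/- Let g : ℝⁿ → ℝⁿ satisfy: (a) |g(x) − g(y)| ≤ (1+ε)|x−y| for all x,y, and (b) |g(x) − x| < ε for all x. Then for all x, y ∈ ℝⁿ, χ(g(x), g(y)) ≤ (1+ε)(1+ε²+2ε) χ(x,y), where χ is the chordal metric χ(x,y) = |x−y|/(√(1+|x|²)√(1+|y|²)). -/
/-!
The weight `w x = √(1 + ‖x‖²)` in the denominator of `χ` is 1-Lipschitz and at least `1`, so
moving a point by at most `ε` changes its weight by a factor at most `1 + ε`. With the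
`(1 + ε)`-Lipschitz bound on the numerator this gives `(1 + ε)³ = (1 + ε)(1 + ε² + 2ε)`.
-/

/-- The chordal (spherical) metric on ℝⁿ. -/
noncomputable def chi {n : ℕ} (x y : EuclideanSpace ℝ (Fin n)) : ℝ :=
  ‖x - y‖ / (Real.sqrt (1 + ‖x‖ ^ 2) * Real.sqrt (1 + ‖y‖ ^ 2))

theorem Real.sqrt_one_add_sq_le_add_abs_sub (a b : ℝ) :
    √(1 + a ^ 2) ≤ √(1 + b ^ 2) + |a - b| := by
  have hb : |b| ≤ √(1 + b ^ 2) := Real.abs_le_sqrt (by linarith)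
  have hcross : b * (a - b) ≤ √(1 + b ^ 2) * |a - b| :=
    (le_abs_self _).trans <| abs_mul b (a - b) ▸ mul_le_mul_of_nonneg_right hb (abs_nonneg _)
  rw [Real.sqrt_le_left (by positivity), add_sq, Real.sq_sqrt (by positivity), sq_abs]
  nlinarith

section WeightedNorm

variable {E : Type*} [SeminormedAddCommGroup E]

theorem sqrt_one_add_norm_sq_le_add_norm_sub (x y : E) :
    √(1 + ‖x‖ ^ 2) ≤ √(1 + ‖y‖ ^ 2) + ‖x - y‖ :=
  (Real.sqrt_one_add_sq_le_add_abs_sub ‖x‖ ‖y‖).trans <| by gcongr; exact abs_norm_sub_norm_le x y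

theorem sqrt_one_add_norm_sq_le_mul_of_norm_sub_le {x y : E} {ε : ℝ} (h : ‖x - y‖ ≤ ε) :
    √(1 + ‖x‖ ^ 2) ≤ (1 + ε) * √(1 + ‖y‖ ^ 2) := by
  have hε : 0 ≤ ε := (norm_nonneg _).trans h
  have hw : 1 ≤ √(1 + ‖y‖ ^ 2) := Real.one_le_sqrt.mpr (by nlinarith [sq_nonneg ‖y‖])
  nlinarith [sqrt_one_add_norm_sq_le_add_norm_sub x y]

end WeightedNorm

theorem chi_le_mul_of_le {n : ℕ} {x y x' y' : EuclideanSpace ℝ (Fin n)} {L c : ℝ}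
    (hnum : ‖x' - y'‖ ≤ L * ‖x - y‖)
    (hx : √(1 + ‖x‖ ^ 2) ≤ c * √(1 + ‖x'‖ ^ 2)) (hy : √(1 + ‖y‖ ^ 2) ≤ c * √(1 + ‖y'‖ ^ 2)) :
    chi x' y' ≤ L * c ^ 2 * chi x y := by
  have hwx' : 0 < √(1 + ‖x'‖ ^ 2) := by positivity
  have hwy' : 0 < √(1 + ‖y'‖ ^ 2) := by positivity
  have hden : √(1 + ‖x‖ ^ 2) * √(1 + ‖y‖ ^ 2) ≤
      c ^ 2 * (√(1 + ‖x'‖ ^ 2) * √(1 + ‖y'‖ ^ 2)) := by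
    have hc : 0 ≤ c := nonneg_of_mul_nonneg_left ((Real.sqrt_nonneg _).trans hx) hwx'
    calc _ ≤ (c * √(1 + ‖x'‖ ^ 2)) * (c * √(1 + ‖y'‖ ^ 2)) :=
          mul_le_mul hx hy (Real.sqrt_nonneg _) (by positivity)
      _ = _ := by ring
  unfold chi
  rw [← mul_div_assoc, le_div_iff₀ (by positivity)]
  calc ‖x' - y'‖ / (√(1 + ‖x'‖ ^ 2) * √(1 + ‖y'‖ ^ 2)) * (√(1 + ‖x‖ ^ 2) * √(1 + ‖y‖ ^ 2))
      ≤ ‖x' - y'‖ / (√(1 + ‖x'‖ ^ 2) * √(1 + ‖y'‖ ^ 2)) *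
          (c ^ 2 * (√(1 + ‖x'‖ ^ 2) * √(1 + ‖y'‖ ^ 2))) := by gcongr
    _ = c ^ 2 * ‖x' - y'‖ := by field_simp
    _ ≤ c ^ 2 * (L * ‖x - y‖) := by gcongr
    _ = L * c ^ 2 * ‖x - y‖ := by ring

theorem chi_lipschitz_general {n : ℕ} (g : EuclideanSpace ℝ (Fin n) → EuclideanSpace ℝ (Fin n))
    (ε : ℝ)
    (hlip : ∀ x y, ‖g x - g y‖ ≤ (1 + ε) * ‖x - y‖)
    (hmove : ∀ x, ‖g x - x‖ < ε) :
    ∀ x y, chi (g x) (g y) ≤ (1 + ε) * (1 + ε ^ 2 + 2 * ε) * chi x y := by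
  intro x y
  have hweight : ∀ z, √(1 + ‖z‖ ^ 2) ≤ (1 + ε) * √(1 + ‖g z‖ ^ 2) := fun z =>
    sqrt_one_add_norm_sq_le_mul_of_norm_sub_le <| by rw [norm_sub_rev]; exact (hmove z).le
  calc chi (g x) (g y) ≤ (1 + ε) * (1 + ε) ^ 2 * chi x y :=
        chi_le_mul_of_le (hlip x y) (hweight x) (hweight y)
    _ = (1 + ε) * (1 + ε ^ 2 + 2 * ε) * chi x y := by ring

/-- a (1+ε)-Lipschitz map moving points by less than ε expands the
chordal metric by at most (1+ε)(1+ε²+2ε). -/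
theorem chi_lipschitz {n : ℕ} (g : EuclideanSpace ℝ (Fin n) → EuclideanSpace ℝ (Fin n))
    (ε : ℝ) (hε : 0 < ε)
    (hlip : ∀ x y, ‖g x - g y‖ ≤ (1 + ε) * ‖x - y‖)
    (hmove : ∀ x, ‖g x - x‖ < ε) :
    ∀ x y, chi (g x) (g y) ≤ (1 + ε) * (1 + ε ^ 2 + 2 * ε) * chi x y :=
  chi_lipschitz_general g ε hlip hmove
end

section
/- Let f : I → ℝ be an L-bi-Lipschitz increasing map on a real interval I with L ≥ 1, let 1 < α ≤ L, and let λ = log α / log L. Fix x₀ ∈ I and define f₁(x) = ∫_{x₀}^{x} (f′(t))^λ dt (where f′ exists a.e. and L⁻¹ ≤ f′ ≤ L a.e.). Then f₁ is α-bi-Lipschitz, i.e., α⁻¹|x−y| ≤ |f₁(x) − f₁(y)| ≤ α|x−y| for all x,y ∈ I. -/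
/-! Since `log α / log L = log_L α`, the power map `s ↦ s ^ (log α / log L)` sends `[L⁻¹, L]`
into `[α⁻¹, α]`. Hence `f₁` is a primitive of a measurable function with values in `[α⁻¹, α]`,
and the integral of such a function over `[y, x]` lies between `α⁻¹ (x - y)` and `α (x - y)`. -/

open MeasureTheory Set

lemma aestronglyMeasurable_restrict_of_ae_hasDerivAt {μ : Measure ℝ} {s : Set ℝ}
    (hs : MeasurableSet s) {f f' : ℝ → ℝ} (h : ∀ᵐ t ∂μ, t ∈ s → HasDerivAt f (f' t) t) :
    AEStronglyMeasurable f' (μ.restrict s) :=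
  (aestronglyMeasurable_deriv f _).congr <|
    (ae_restrict_iff' hs).2 <| h.mono fun _ ht hts => (ht hts).deriv

lemma Set.OrdConnected.intervalIntegrable_of_norm_le {I : Set ℝ} (hI : I.OrdConnected)
    {g : ℝ → ℝ} {C : ℝ} (hg : AEStronglyMeasurable g (volume.restrict I))
    (hC : ∀ t ∈ I, ‖g t‖ ≤ C) {a b : ℝ} (ha : a ∈ I) (hb : b ∈ I) :
    IntervalIntegrable g volume a b := by
  have hab : uIcc a b ⊆ I := hI.uIcc_subset ha hb
  rw [intervalIntegrable_iff']
  exact IntegrableOn.of_bound measure_Icc_lt_top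
    (hg.mono_measure (Measure.restrict_mono hab le_rfl)) C
    ((ae_restrict_iff' measurableSet_uIcc).2 <| .of_forall fun t ht => hC t (hab ht))

lemma mul_abs_sub_le_abs_intervalIntegral {g : ℝ → ℝ} {a b m : ℝ}
    (hg : IntervalIntegrable g volume a b) (hm : ∀ t ∈ uIcc a b, m ≤ g t) :
    m * |b - a| ≤ |∫ t in a..b, g t| := by
  wlog hab : a ≤ b generalizing a b
  · have := this hg.symm (by rwa [uIcc_comm]) (le_of_not_ge hab)
    rwa [intervalIntegral.integral_symm, abs_neg, abs_sub_comm]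
  calc m * |b - a| = ∫ _ in a..b, m := by
        rw [intervalIntegral.integral_const, abs_of_nonneg (sub_nonneg.2 hab), smul_eq_mul,
          mul_comm]
    _ ≤ ∫ t in a..b, g t :=
        intervalIntegral.integral_mono_on hab intervalIntegrable_const hg fun t ht =>
          hm t (Icc_subset_uIcc ht)
    _ ≤ |∫ t in a..b, g t| := le_abs_self _

theorem Set.OrdConnected.bilipschitz_primitive {I : Set ℝ} (hI : I.OrdConnected) {g : ℝ → ℝ}
    {m M : ℝ} (hm : 0 ≤ m) (hg : AEStronglyMeasurable g (volume.restrict I))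
    (hgI : ∀ t ∈ I, m ≤ g t ∧ g t ≤ M) {x₀ : ℝ} (hx₀ : x₀ ∈ I) :
    ∀ x ∈ I, ∀ y ∈ I, m * |x - y| ≤ |(∫ t in x₀..x, g t) - ∫ t in x₀..y, g t| ∧
      |(∫ t in x₀..x, g t) - ∫ t in x₀..y, g t| ≤ M * |x - y| := by
  intro x hx y hy
  have hnorm : ∀ t ∈ I, ‖g t‖ ≤ M := fun t ht => by
    rw [Real.norm_of_nonneg (hm.trans (hgI t ht).1)]; exact (hgI t ht).2
  have hint : ∀ a ∈ I, ∀ b ∈ I, IntervalIntegrable g volume a b := fun _ ha _ hb =>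
    hI.intervalIntegrable_of_norm_le hg hnorm ha hb
  have hyx : uIcc y x ⊆ I := hI.uIcc_subset hy hx
  rw [intervalIntegral.integral_interval_sub_left (hint x₀ hx₀ x hx) (hint x₀ hx₀ y hy)]
  refine ⟨mul_abs_sub_le_abs_intervalIntegral (hint y hy x hx) fun t ht => (hgI t (hyx ht)).1,
    ?_⟩
  simpa only [Real.norm_eq_abs] using intervalIntegral.norm_integral_le_of_norm_le_const
    fun t ht => hnorm t (hyx (uIoc_subset_uIcc ht))

theorem f1_bilipschitz_general {I : Set ℝ} (hI : I.OrdConnected)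
    (f f' : ℝ → ℝ) (L α : ℝ) (hα : 1 < α) (hαL : α ≤ L)
    (hderiv : ∀ᵐ t ∂volume, t ∈ I → HasDerivAt f (f' t) t)
    (hbound : ∀ t ∈ I, L⁻¹ ≤ f' t ∧ f' t ≤ L)
    (x₀ : ℝ) (hx₀ : x₀ ∈ I)
    (f₁ : ℝ → ℝ)
    (hf₁ : ∀ x, f₁ x = ∫ t in x₀..x, (f' t) ^ (Real.log α / Real.log L)) :
    ∀ x ∈ I, ∀ y ∈ I, α⁻¹ * |x - y| ≤ |f₁ x - f₁ y| ∧ |f₁ x - f₁ y| ≤ α * |x - y| := by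
  have hα₀ : 0 < α := one_pos.trans hα
  have hL₀ : 0 < L := hα₀.trans_le hαL
  set lam := Real.log α / Real.log L
  have hlam : 0 ≤ lam := div_nonneg (Real.log_nonneg hα.le) (Real.log_nonneg (hα.le.trans hαL))
  have hLlam : L ^ lam = α := Real.rpow_logb hL₀ (hα.trans_le hαL).ne' hα₀
  have hmeas : AEStronglyMeasurable (fun t => f' t ^ lam) (volume.restrict I) :=
    ((aestronglyMeasurable_restrict_of_ae_hasDerivAt hI.measurableSet hderiv).aemeasurable
      |>.pow_const lam).aestronglyMeasurable
  have hbound' : ∀ t ∈ I, α⁻¹ ≤ f' t ^ lam ∧ f' t ^ lam ≤ α := fun t ht => by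
    obtain ⟨hlow, hup⟩ := hbound t ht
    rw [← hLlam, ← Real.inv_rpow hL₀.le]
    exact ⟨Real.rpow_le_rpow (by positivity) hlow hlam,
      Real.rpow_le_rpow ((inv_pos.2 hL₀).le.trans hlow) hup hlam⟩
  simp only [hf₁]
  exact hI.bilipschitz_primitive (inv_nonneg.2 hα₀.le) hmeas hbound' hx₀

/-- if f is an increasing L-bi-Lipschitz map on an interval I, with
derivative f′ satisfying L⁻¹ ≤ f′ ≤ L on I, and λ = log α / log L with 1 < α ≤ L,
then f₁(x) = ∫_{x₀}^x (f′(t))^λ dt is α-bi-Lipschitz on I. -/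
theorem f1_bilipschitz {I : Set ℝ} (hI : I.OrdConnected)
    (f f' : ℝ → ℝ) (L α : ℝ) (hL : 1 ≤ L) (hα : 1 < α) (hαL : α ≤ L)
    (hmono : StrictMonoOn f I)
    (hbilip : ∀ x ∈ I, ∀ y ∈ I, |x - y| / L ≤ |f x - f y| ∧ |f x - f y| ≤ L * |x - y|)
    (hderiv : ∀ᵐ t ∂volume, t ∈ I → HasDerivAt f (f' t) t)
    (hbound : ∀ t ∈ I, L⁻¹ ≤ f' t ∧ f' t ≤ L)
    (x₀ : ℝ) (hx₀ : x₀ ∈ I)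
    (f₁ : ℝ → ℝ)
    (hf₁ : ∀ x, f₁ x = ∫ t in x₀..x, (f' t) ^ (Real.log α / Real.log L)) :
    ∀ x ∈ I, ∀ y ∈ I, α⁻¹ * |x - y| ≤ |f₁ x - f₁ y| ∧ |f₁ x - f₁ y| ≤ α * |x - y| :=
  f1_bilipschitz_general hI f f' L α hα hαL hderiv hbound x₀ hx₀ f₁ hf₁
end

section
/- Any L-bi-Lipschitz map of a metric space onto itself can be written as a composition of at most N bi-Lipschitz factors each of distortion at most α, whenever it admits a factorization through maps with multiplicative distortion bounds; in the 1-dimensional case: every increasing L-bi-Lipschitz homeomorphism f : [0,1] → [0,1] with 1 < α < L factors as f = f₂ ∘ f₁ with f₁ α-bi-Lipschitz and f₂ (L/α)-bi-Lipschitz. -/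
/-!
Take `f₁ = c • id + d • f` with `c, d ≥ 0`. Since `id` and `f` are both increasing, distances add:
`|f₁ x - f₁ y| = c |x - y| + d |f x - f y|`. As `|f x - f y|` lies between `|x - y| / L` and
`L |x - y|`, the sum lies between `(c L + d) / L` and `c + d L` times `|x - y|`, and between
`(c + d L) / L` and `c L + d` times `|f x - f y|`. Solving `c + d L = α`, `c L + d = L / α`
makes `f₁` `α`-bi-Lipschitz and `f ∘ f₁⁻¹` `(L / α)`-bi-Lipschitz.
-/

open Set

def IsBiLipschitzOn (K : ℝ) (g : ℝ → ℝ) (s : Set ℝ) : Prop :=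
  ∀ x ∈ s, ∀ y ∈ s, |x - y| / K ≤ |g x - g y| ∧ |g x - g y| ≤ K * |x - y|

theorem IsBiLipschitzOn.injOn {K : ℝ} {g : ℝ → ℝ} {s : Set ℝ} (h : IsBiLipschitzOn K g s)
    (hK : 0 < K) : InjOn g s := by
  intro x hx y hy hxy
  have hle : |x - y| / K ≤ 0 := by simpa [hxy] using (h x hx y hy).1
  have : |x - y| ≤ 0 := by rwa [div_le_iff₀ hK, zero_mul] at hle
  exact sub_eq_zero.mp (abs_nonpos_iff.mp this)

theorem isBiLipschitzOn_comp_invFunOn {K : ℝ} {f g : ℝ → ℝ} {s : Set ℝ} (hg : InjOn g s)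
    (h : ∀ x ∈ s, ∀ y ∈ s, |g x - g y| / K ≤ |f x - f y| ∧ |f x - f y| ≤ K * |g x - g y|) :
    IsBiLipschitzOn K (f ∘ Function.invFunOn g s) (g '' s) := by
  rintro _ ⟨x, hx, rfl⟩ _ ⟨y, hy, rfl⟩
  simpa only [Function.comp_apply, hg.leftInvOn_invFunOn hx, hg.leftInvOn_invFunOn hy]
    using h x hx y hy

theorem abs_sub_linear_combination_of_monotoneOn {f : ℝ → ℝ} {s : Set ℝ} (hf : MonotoneOn f s)
    {c d : ℝ} (hc : 0 ≤ c) (hd : 0 ≤ d) {x y : ℝ} (hx : x ∈ s) (hy : y ∈ s) :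
    |(c * x + d * f x) - (c * y + d * f y)| = c * |x - y| + d * |f x - f y| := by
  rw [show (c * x + d * f x) - (c * y + d * f y) = c * (x - y) + d * (f x - f y) by ring,
    (abs_add_eq_add_abs_iff _ _).mpr, abs_mul, abs_mul, abs_of_nonneg hc, abs_of_nonneg hd]
  rcases le_total x y with hxy | hyx
  · have := hf hx hy hxy
    exact Or.inr ⟨mul_nonpos_of_nonneg_of_nonpos hc (by linarith),
      mul_nonpos_of_nonneg_of_nonpos hd (by linarith)⟩
  · have := hf hy hx hyx
    exact Or.inl ⟨mul_nonneg hc (by linarith), mul_nonneg hd (by linarith)⟩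

theorem exists_coeffs_add_mul_eq {L α : ℝ} (hα : 1 ≤ α) (hαL : α < L) :
    ∃ c d : ℝ, 0 ≤ c ∧ 0 ≤ d ∧ c + d * L = α ∧ c * L + d = L / α := by
  have hL : 0 < L ^ 2 - 1 := by nlinarith
  have hden : 0 < α * (L ^ 2 - 1) := by positivity
  refine ⟨(L ^ 2 - α ^ 2) / (α * (L ^ 2 - 1)), L * (α ^ 2 - 1) / (α * (L ^ 2 - 1)),
    div_nonneg (by nlinarith) hden.le, div_nonneg (by nlinarith) hden.le, ?_, ?_⟩ <;>
  · field_simp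
    ring

section LinearCombination

variable {f : ℝ → ℝ} {s : Set ℝ} {L α c d : ℝ} (hf : MonotoneOn f s) (hbi : IsBiLipschitzOn L f s)
  (hL : 0 < L) (hα : 0 < α) (hc : 0 ≤ c) (hd : 0 ≤ d)
  (hcd : c + d * L = α) (hdc : c * L + d = L / α)
include hf hbi hL hα hc hd hcd hdc

theorem isBiLipschitzOn_linear_combination :
    IsBiLipschitzOn α (fun x => c * x + d * f x) s := by
  intro x hx y hy
  obtain ⟨hlow, hup⟩ := hbi x hx y hy
  rw [abs_sub_linear_combination_of_monotoneOn hf hc hd hx hy]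
  constructor
  · calc |x - y| / α = (c * L + d) * |x - y| / L := by rw [hdc]; field_simp
      _ = c * |x - y| + d * (|x - y| / L) := by field_simp
      _ ≤ c * |x - y| + d * |f x - f y| := by gcongr
  · calc c * |x - y| + d * |f x - f y| ≤ c * |x - y| + d * (L * |x - y|) := by gcongr
      _ = α * |x - y| := by rw [← hcd]; ring

theorem isBiLipschitzOn_comp_invFunOn_linear_combination :
    IsBiLipschitzOn (L / α) (f ∘ Function.invFunOn (fun x => c * x + d * f x) s)
      ((fun x => c * x + d * f x) '' s) := by
  refine isBiLipschitzOn_comp_invFunOn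
    ((isBiLipschitzOn_linear_combination hf hbi hL hα hc hd hcd hdc).injOn hα) ?_
  intro x hx y hy
  obtain ⟨hlow, hup⟩ := hbi x hx y hy
  have hlow' : |x - y| ≤ L * |f x - f y| := by rwa [div_le_iff₀ hL, mul_comm] at hlow
  have hup' : |f x - f y| / L ≤ |x - y| := by rwa [div_le_iff₀ hL, mul_comm]
  rw [abs_sub_linear_combination_of_monotoneOn hf hc hd hx hy]
  constructor
  · calc (c * |x - y| + d * |f x - f y|) / (L / α)
          ≤ (c * (L * |f x - f y|) + d * |f x - f y|) / (L / α) := by gcongr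
      _ = |f x - f y| := by
          rw [show c * (L * |f x - f y|) + d * |f x - f y| = (c * L + d) * |f x - f y| by ring, hdc]
          field_simp
  · calc |f x - f y| = L / α * (c * (|f x - f y| / L) + d * |f x - f y|) := by
          rw [show L / α * (c * (|f x - f y| / L) + d * |f x - f y|)
            = (c + d * L) * |f x - f y| / α by field_simp, hcd]
          field_simp
      _ ≤ L / α * (c * |x - y| + d * |f x - f y|) := by gcongr

end LinearCombination

theorem bilipschitz_factorization_general (f : ℝ → ℝ) (L α : ℝ) (hα : 1 < α) (hαL : α < L)
    (hmono : StrictMonoOn f (Icc 0 1))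
    (hbilip : ∀ x ∈ Icc (0:ℝ) 1, ∀ y ∈ Icc (0:ℝ) 1,
      |x - y| / L ≤ |f x - f y| ∧ |f x - f y| ≤ L * |x - y|) :
    ∃ f₁ f₂ : ℝ → ℝ,
      (∀ x ∈ Icc (0:ℝ) 1, f x = f₂ (f₁ x)) ∧
      (∀ x ∈ Icc (0:ℝ) 1, ∀ y ∈ Icc (0:ℝ) 1,
        |x - y| / α ≤ |f₁ x - f₁ y| ∧ |f₁ x - f₁ y| ≤ α * |x - y|) ∧
      (∀ u ∈ f₁ '' Icc (0:ℝ) 1, ∀ v ∈ f₁ '' Icc (0:ℝ) 1,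
        |u - v| / (L / α) ≤ |f₂ u - f₂ v| ∧ |f₂ u - f₂ v| ≤ (L / α) * |u - v|) := by
  have hα0 : 0 < α := by linarith
  obtain ⟨c, d, hc, hd, hcd, hdc⟩ := exists_coeffs_add_mul_eq hα.le hαL
  have hf := hmono.monotoneOn
  have hbi : IsBiLipschitzOn L f (Icc 0 1) := hbilip
  have hL : 0 < L := by linarith
  have hf₁ := isBiLipschitzOn_linear_combination hf hbi hL hα0 hc hd hcd hdc
  refine ⟨_, _, fun x hx => ?_, hf₁,
    isBiLipschitzOn_comp_invFunOn_linear_combination hf hbi hL hα0 hc hd hcd hdc⟩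
  rw [Function.comp_apply, (hf₁.injOn hα0).leftInvOn_invFunOn hx]

/-- every increasing L-bi-Lipschitz homeomorphism f : [0,1] → [0,1]
with 1 < α < L factors as f = f₂ ∘ f₁ with f₁ α-bi-Lipschitz and f₂ (L/α)-bi-Lipschitz
(the latter on the image of [0,1] under f₁). -/
theorem bilipschitz_factorization (f : ℝ → ℝ) (L α : ℝ) (hα : 1 < α) (hαL : α < L)
    (hmono : StrictMonoOn f (Icc 0 1))
    (hmaps : MapsTo f (Icc 0 1) (Icc 0 1))
    (hsurj : SurjOn f (Icc 0 1) (Icc 0 1))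
    (hbilip : ∀ x ∈ Icc (0:ℝ) 1, ∀ y ∈ Icc (0:ℝ) 1,
      |x - y| / L ≤ |f x - f y| ∧ |f x - f y| ≤ L * |x - y|) :
    ∃ f₁ f₂ : ℝ → ℝ,
      (∀ x ∈ Icc (0:ℝ) 1, f x = f₂ (f₁ x)) ∧
      (∀ x ∈ Icc (0:ℝ) 1, ∀ y ∈ Icc (0:ℝ) 1,
        |x - y| / α ≤ |f₁ x - f₁ y| ∧ |f₁ x - f₁ y| ≤ α * |x - y|) ∧
      (∀ u ∈ f₁ '' Icc (0:ℝ) 1, ∀ v ∈ f₁ '' Icc (0:ℝ) 1,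
        |u - v| / (L / α) ≤ |f₂ u - f₂ v| ∧ |f₂ u - f₂ v| ≤ (L / α) * |u - v|) :=
  bilipschitz_factorization_general f L α hα hαL hmono hbilip
end

section
/- Let g be a bijection of ℝⁿ with g and g⁻¹ both T-Lipschitz (T ≥ 1), and set h_t = g⁻¹ ∘ A_t⁻¹ ∘ g ∘ A_t where A_t(x) = x + t e₁. Then for all s, t ∈ [0,1] and all x ∈ ℝⁿ, |h_s(h_t⁻¹(x)) − x| ≤ T(T+1)|s − t|. -/
/-! With `y = h_t⁻¹ x` the displacement is `h_s y - h_t y`. Replacing `s` by `t` moves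
`g (y + s e₁)` by at most `T |s - t|` and the outer translation by `|s - t|`, and the outer
`g⁻¹` multiplies the total by at most `T`. -/

section TranslationConjugate

variable {E : Type*} [NormedAddCommGroup E] {T : ℝ} {f finv : E → E}

theorem norm_translate_conj_sub_le (hf : ∀ x y, ‖f x - f y‖ ≤ T * ‖x - y‖) (y a b : E) :
    ‖(f (y + a) - a) - (f (y + b) - b)‖ ≤ (T + 1) * ‖a - b‖ :=
  calc ‖(f (y + a) - a) - (f (y + b) - b)‖ = ‖(f (y + a) - f (y + b)) - (a - b)‖ := by
        congr 1; abel
    _ ≤ ‖f (y + a) - f (y + b)‖ + ‖a - b‖ := norm_sub_le _ _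
    _ ≤ T * ‖a - b‖ + ‖a - b‖ := by
        gcongr
        simpa using hf (y + a) (y + b)
    _ = (T + 1) * ‖a - b‖ := by ring

theorem norm_inv_translate_conj_sub_le (hT : 0 ≤ T)
    (hf : ∀ x y, ‖f x - f y‖ ≤ T * ‖x - y‖) (hfinv : ∀ x y, ‖finv x - finv y‖ ≤ T * ‖x - y‖)
    (y a b : E) :
    ‖finv (f (y + a) - a) - finv (f (y + b) - b)‖ ≤ T * (T + 1) * ‖a - b‖ :=
  calc ‖finv (f (y + a) - a) - finv (f (y + b) - b)‖
      ≤ T * ‖(f (y + a) - a) - (f (y + b) - b)‖ := hfinv _ _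
    _ ≤ T * ((T + 1) * ‖a - b‖) := by gcongr; exact norm_translate_conj_sub_le hf y a b
    _ = T * (T + 1) * ‖a - b‖ := by ring

end TranslationConjugate

theorem h_path_move_bound_general {n : ℕ} (hn : 0 < n) (T : ℝ) (hT : 1 ≤ T)
    (g ginv : EuclideanSpace ℝ (Fin n) → EuclideanSpace ℝ (Fin n))
    (hg : ∀ x y, ‖g x - g y‖ ≤ T * ‖x - y‖)
    (hginv : ∀ x y, ‖ginv x - ginv y‖ ≤ T * ‖x - y‖)
    (e₁ : EuclideanSpace ℝ (Fin n)) (he₁ : e₁ = EuclideanSpace.single ⟨0, hn⟩ (1 : ℝ))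
    (A : ℝ → EuclideanSpace ℝ (Fin n) → EuclideanSpace ℝ (Fin n))
    (hA : ∀ t x, A t x = x + t • e₁)
    (h : ℝ → EuclideanSpace ℝ (Fin n) → EuclideanSpace ℝ (Fin n))
    (hh : ∀ t x, h t x = ginv (A (-t) (g (A t x))))
    (hinv : ℝ → EuclideanSpace ℝ (Fin n) → EuclideanSpace ℝ (Fin n))
    (hhinv : ∀ t, Function.LeftInverse (hinv t) (h t) ∧ Function.RightInverse (hinv t) (h t)) :
    ∀ s ∈ Set.Icc (0:ℝ) 1, ∀ t ∈ Set.Icc (0:ℝ) 1, ∀ x,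
      ‖h s (hinv t x) - x‖ ≤ T * (T + 1) * |s - t| := by
  intro s _ t _ x
  set y := hinv t x
  calc ‖h s y - x‖ = ‖h s y - h t y‖ := by rw [(hhinv t).2 x]
    _ = ‖ginv (g (y + s • e₁) - s • e₁) - ginv (g (y + t • e₁) - t • e₁)‖ := by
        simp only [hh, hA, neg_smul, ← sub_eq_add_neg]
    _ ≤ T * (T + 1) * ‖s • e₁ - t • e₁‖ :=
        norm_inv_translate_conj_sub_le (by linarith) hg hginv y _ _
    _ = T * (T + 1) * |s - t| := by
        rw [← sub_smul, norm_smul, he₁, PiLp.norm_single, norm_one, mul_one,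
          Real.norm_eq_abs]

/-- with h_t = g⁻¹ ∘ A_t⁻¹ ∘ g ∘ A_t, for s,t ∈ [0,1] and all x,
|h_s(h_t⁻¹(x)) − x| ≤ T(T+1)|s−t|. -/
theorem h_path_move_bound {n : ℕ} (hn : 0 < n) (T : ℝ) (hT : 1 ≤ T)
    (g ginv : EuclideanSpace ℝ (Fin n) → EuclideanSpace ℝ (Fin n))
    (hleft : Function.LeftInverse ginv g) (hright : Function.RightInverse ginv g)
    (hg : ∀ x y, ‖g x - g y‖ ≤ T * ‖x - y‖)
    (hginv : ∀ x y, ‖ginv x - ginv y‖ ≤ T * ‖x - y‖)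
    (e₁ : EuclideanSpace ℝ (Fin n)) (he₁ : e₁ = EuclideanSpace.single ⟨0, hn⟩ (1 : ℝ))
    (A : ℝ → EuclideanSpace ℝ (Fin n) → EuclideanSpace ℝ (Fin n))
    (hA : ∀ t x, A t x = x + t • e₁)
    (h : ℝ → EuclideanSpace ℝ (Fin n) → EuclideanSpace ℝ (Fin n))
    (hh : ∀ t x, h t x = ginv (A (-t) (g (A t x))))
    (hinv : ℝ → EuclideanSpace ℝ (Fin n) → EuclideanSpace ℝ (Fin n))
    (hhinv : ∀ t, Function.LeftInverse (hinv t) (h t) ∧ Function.RightInverse (hinv t) (h t)) :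
    ∀ s ∈ Set.Icc (0:ℝ) 1, ∀ t ∈ Set.Icc (0:ℝ) 1, ∀ x,
      ‖h s (hinv t x) - x‖ ≤ T * (T + 1) * |s - t| :=
  h_path_move_bound_general hn T hT g ginv hg hginv e₁ he₁ A hA h hh hinv hhinv
end

section
/- Let g, h_t be as above. Then h₀ is the identity map of ℝⁿ, and if additionally g = A_m ∘ f ∘ A_m⁻¹ on B_m = A_m(B(0,1/3)) for every positive integer m and g = id elsewhere (where f is supported in B(0,1/3)), then h₁ = f. -/
/-!
Write `S + k e` for the translates of the support `S` of `f`. Since the translates with `k ≥ 1`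
miss `S`, `g ∘ f` conjugates `f` into every `S + k e` with `k ≥ 0`, while `g` does so for `k ≥ 1`.
Conjugating by the unit shift turns the latter into the former: `g (x + e) = g (f x) + e`.
Hence `h₁ = g⁻¹ ∘ g ∘ f = f`, while `h₀ = g⁻¹ ∘ g = id`.
-/

open Metric

theorem Function.Injective.mapsTo_of_eqOn_compl {α : Type*} {S : Set α} {f : α → α}
    (hfinj : Function.Injective f) (hf : ∀ x ∉ S, f x = x) : Set.MapsTo f S S := by
  intro x hx
  by_contra hfx
  exact (hfinj (hf (f x) hfx) ▸ hfx) hx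

section Propagation

variable {E : Type*} [AddCommGroup E] [Module ℝ E]

/-- `g` conjugates `f` into each translate `S + m e` with `m ≥ 1` and is the identity off them. -/
structure IsPropagation (S : Set E) (e : E) (f g : E → E) : Prop where
  apply_of_sub_mem : ∀ m : ℕ, 0 < m → ∀ x, x - (m : ℝ) • e ∈ S →
    g x = f (x - (m : ℝ) • e) + (m : ℝ) • e
  apply_of_forall_sub_notMem : ∀ x, (∀ m : ℕ, 0 < m → x - (m : ℝ) • e ∉ S) → g x = x

variable {S : Set E} {e : E} {f g : E → E}

theorem IsPropagation.comp_apply_of_sub_mem (hg : IsPropagation S e f g)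
    (hS : ∀ m : ℕ, 0 < m → ∀ y ∈ S, y - (m : ℝ) • e ∉ S)
    (hfinj : Function.Injective f) (hf : ∀ x ∉ S, f x = x) {x : E} {k : ℕ}
    (hx : x - (k : ℝ) • e ∈ S) : g (f x) = f (x - (k : ℝ) • e) + (k : ℝ) • e := by
  rcases Nat.eq_zero_or_pos k with rfl | hk
  · simp only [Nat.cast_zero, zero_smul, sub_zero, add_zero] at hx ⊢
    exact hg.apply_of_forall_sub_notMem _ fun m hm => hS m hm _ (hfinj.mapsTo_of_eqOn_compl hf hx)
  · rw [hf x fun hxS => hS k hk x hxS hx]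
    exact hg.apply_of_sub_mem k hk x hx

theorem IsPropagation.comp_apply_of_forall_sub_notMem (hg : IsPropagation S e f g)
    (hf : ∀ x ∉ S, f x = x) {x : E} (hx : ∀ k : ℕ, x - (k : ℝ) • e ∉ S) : g (f x) = x := by
  have hxS : x ∉ S := by simpa using hx 0
  rw [hf x hxS]
  exact hg.apply_of_forall_sub_notMem x fun m _ => hx m

theorem IsPropagation.apply_add_eq_comp_apply_add (hg : IsPropagation S e f g)
    (hS : ∀ m : ℕ, 0 < m → ∀ y ∈ S, y - (m : ℝ) • e ∉ S)
    (hfinj : Function.Injective f) (hf : ∀ x ∉ S, f x = x) (x : E) :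
    g (x + e) = g (f x) + e := by
  have hshift (k : ℕ) : x + e - ((k + 1 : ℕ) : ℝ) • e = x - (k : ℝ) • e := by
    push_cast
    module
  by_cases hx : ∃ k : ℕ, x - (k : ℝ) • e ∈ S
  · obtain ⟨k, hk⟩ := hx
    rw [hg.apply_of_sub_mem (k + 1) k.succ_pos _ (hshift k ▸ hk), hshift,
      hg.comp_apply_of_sub_mem hS hfinj hf hk, Nat.cast_succ, add_smul, one_smul, add_assoc]
  · push Not at hx
    rw [hg.comp_apply_of_forall_sub_notMem hf hx]
    refine hg.apply_of_forall_sub_notMem _ fun m hm => ?_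
    obtain ⟨k, rfl⟩ := Nat.exists_eq_succ_of_ne_zero hm.ne'
    exact hshift k ▸ hx k

end Propagation

theorem sub_nsmul_notMem_closedBall {E : Type*} [SeminormedAddCommGroup E] [NormedSpace ℝ E]
    {e : E} {r : ℝ} (he : 2 * r < ‖e‖) {m : ℕ} (hm : 0 < m) {y : E}
    (hy : y ∈ closedBall 0 r) : y - (m : ℝ) • e ∉ closedBall 0 r := by
  intro hym
  rw [mem_closedBall_zero_iff] at hy hym
  have hm1 : (1 : ℝ) ≤ m := by exact_mod_cast hm
  have : ‖(m : ℝ) • e‖ ≤ ‖y‖ + ‖y - (m : ℝ) • e‖ := by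
    simpa using norm_sub_le y (y - (m : ℝ) • e)
  rw [norm_smul, Real.norm_natCast] at this
  nlinarith [norm_nonneg e]

theorem h_endpoints_general {n : ℕ} (hn : 0 < n)
    (f g ginv : EuclideanSpace ℝ (Fin n) → EuclideanSpace ℝ (Fin n))
    (hfbij : Function.Bijective f)
    (e₁ : EuclideanSpace ℝ (Fin n)) (he₁ : e₁ = EuclideanSpace.single ⟨0, hn⟩ (1 : ℝ))
    (A : ℝ → EuclideanSpace ℝ (Fin n) → EuclideanSpace ℝ (Fin n))
    (hA : ∀ t x, A t x = x + t • e₁)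
    (hf : ∀ x ∉ Metric.closedBall (0 : EuclideanSpace ℝ (Fin n)) (1/3), f x = x)
    (hg1 : ∀ m : ℕ, 0 < m →
      ∀ x ∈ A (m : ℝ) '' Metric.closedBall (0 : EuclideanSpace ℝ (Fin n)) (1/3),
        g x = A (m : ℝ) (f (A (-(m : ℝ)) x)))
    (hg2 : ∀ x, (∀ m : ℕ, 0 < m →
      x ∉ A (m : ℝ) '' Metric.closedBall (0 : EuclideanSpace ℝ (Fin n)) (1/3)) → g x = x)
    (hleft : Function.LeftInverse ginv g)
    (h : ℝ → EuclideanSpace ℝ (Fin n) → EuclideanSpace ℝ (Fin n))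
    (hh : ∀ t x, h t x = ginv (A (-t) (g (A t x)))) :
    (∀ x, h 0 x = x) ∧ (∀ x, h 1 x = f x) := by
  obtain rfl : A = fun t x => x + t • e₁ := funext₂ hA
  simp only [Set.image_add_right, Set.mem_preimage, neg_smul, ← sub_eq_add_neg] at hg1 hg2 hh
  have hg : IsPropagation (closedBall 0 (1/3)) e₁ f g := ⟨hg1, hg2⟩
  have hnorm : 2 * (1/3 : ℝ) < ‖e₁‖ := by rw [he₁, PiLp.norm_single]; norm_num
  refine ⟨fun x => by simpa [hh] using hleft x, fun x => ?_⟩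
  rw [hh, one_smul, hg.apply_add_eq_comp_apply_add (fun m hm y hy => sub_nsmul_notMem_closedBall
    hnorm hm hy) hfbij.1 hf, add_sub_cancel_right, hleft]

/-- with g the propagated version of f (f supported in B(0,1/3),
g = A_m ∘ f ∘ A_m⁻¹ on B_m = A_m(B(0,1/3)) for every positive integer m and g = id
elsewhere) and h_t = g⁻¹ ∘ A_t⁻¹ ∘ g ∘ A_t, we have h₀ = id and h₁ = f. -/
theorem h_endpoints {n : ℕ} (hn : 0 < n)
    (f g ginv : EuclideanSpace ℝ (Fin n) → EuclideanSpace ℝ (Fin n))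
    (hfbij : Function.Bijective f)
    (e₁ : EuclideanSpace ℝ (Fin n)) (he₁ : e₁ = EuclideanSpace.single ⟨0, hn⟩ (1 : ℝ))
    (A : ℝ → EuclideanSpace ℝ (Fin n) → EuclideanSpace ℝ (Fin n))
    (hA : ∀ t x, A t x = x + t • e₁)
    (hf : ∀ x ∉ Metric.closedBall (0 : EuclideanSpace ℝ (Fin n)) (1/3), f x = x)
    (hg1 : ∀ m : ℕ, 0 < m →
      ∀ x ∈ A (m : ℝ) '' Metric.closedBall (0 : EuclideanSpace ℝ (Fin n)) (1/3),
        g x = A (m : ℝ) (f (A (-(m : ℝ)) x)))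
    (hg2 : ∀ x, (∀ m : ℕ, 0 < m →
      x ∉ A (m : ℝ) '' Metric.closedBall (0 : EuclideanSpace ℝ (Fin n)) (1/3)) → g x = x)
    (hleft : Function.LeftInverse ginv g) (hright : Function.RightInverse ginv g)
    (h : ℝ → EuclideanSpace ℝ (Fin n) → EuclideanSpace ℝ (Fin n))
    (hh : ∀ t x, h t x = ginv (A (-t) (g (A t x)))) :
    (∀ x, h 0 x = x) ∧ (∀ x, h 1 x = f x) :=
  h_endpoints_general hn f g ginv hfbij e₁ he₁ A hA hf hg1 hg2 hleft h hh
end
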